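/- Let (Û_{n,·})_{n∈ℕ} be random elements of C[0,1] on a probability space, let U_{n,t} ∈ ℝ and a_{n,t} > 0 (for n ∈ ℕ, t ∈ [0,1]) be deterministic constants, let B be a random element of C[0,1], and let (λ_n) be a positive bounded sequence. Assume (i) sup_{t∈[0,1]} |λ_n^{−1}(Û_{n,t} − U_{n,t})/a_{n,t} − B_t| →(P) 0 as n → ∞, (ii) sup_{|s−t|≤δ_n} |a_{n,s}/a_{n,t} − 1| = o(λ_n), and (iii) sup_{|s−t|≤δ_n} |(U_{n,s} − U_{n,t})/a_{n,t}| = o(λ_n). Then the linearly interpolated estimator Û*_{n,t} := ⟨Û_{n,·}⟩_{n,t} satisfies sup_{t∈[0,1]} |λ_n^{−1}(Û*_{n,t} − U_{n,t})/a_{n,t} − B_t| →(P) 0. -/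

import Mathlib

/-!
At a point `s`, the interpolated estimator is a convex combination of the estimator at two grid
points `u` with `|u - s| ≤ δₙ`, so it suffices to control the standardized error at `s` of the
estimator taken at such a nearby `u`. Passing from `u` to `s` costs the smoothness terms (ii) and
(iii) and the terms `B_u (a_u / a_s - 1)` and `B_u - B_s`, which are small as soon as `sup |B|` and
the oscillation of `B` at scale `δₙ` are bounded in probability.

The limit `B` need not be measurable, so this tightness is read off one standardized error process
`Z` that is uniformly close to `B` outside a set of small outer measure: the events that `Z` is
bounded with small oscillation on a countable dense set are measurable, exhaust the complement of
that set, and transfer to `B` by continuity.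
-/

open MeasureTheory Filter Topology Set
open scoped Classical

/-- Piecewise linear interpolation of `z` on the grid `t 1 < t 2 < … < t jn`. -/
noncomputable def linInterp (jn : ℕ) (t : ℕ → ℝ) (z : ℝ → ℝ) (x : ℝ) : ℝ :=
  if x ≤ t 1 then z (t 1)
  else if h : ∃ j, 2 ≤ j ∧ j ≤ jn ∧ t (j - 1) < x ∧ x ≤ t j then
    ((t (Nat.find h) - x) * z (t (Nat.find h - 1))
        + (x - t (Nat.find h - 1)) * z (t (Nat.find h)))
      / (t (Nat.find h) - t (Nat.find h - 1))
  else z (t jn)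

section Oscillation

variable {T : Type*} [PseudoMetricSpace T]

def BoundedWithOscillationOn (D : Set T) (f : T → ℝ) (M ρ ε : ℝ) : Prop :=
  (∀ s ∈ D, |f s| ≤ M) ∧ ∀ s ∈ D, ∀ u ∈ D, dist s u < ρ → |f s - f u| ≤ ε

namespace BoundedWithOscillationOn

variable {D D' : Set T} {f g : T → ℝ} {M M' ρ ρ' ε ε' : ℝ}

theorem mono (h : BoundedWithOscillationOn D f M ρ ε) (hD : D' ⊆ D) (hM : M ≤ M')
    (hρ : ρ' ≤ ρ) (hε : ε ≤ ε') : BoundedWithOscillationOn D' f M' ρ' ε' :=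
  ⟨fun s hs => (h.1 s (hD hs)).trans hM, fun s hs u hu hsu =>
    (h.2 s (hD hs) u (hD hu) (hsu.trans_le hρ)).trans hε⟩

theorem of_abs_sub_le (h : BoundedWithOscillationOn D f M ρ ε) {θ : ℝ}
    (hfg : ∀ s ∈ D, |g s - f s| ≤ θ) : BoundedWithOscillationOn D g (M + θ) ρ (ε + 2 * θ) := by
  refine ⟨fun s hs => ?_, fun s hs u hu hsu => ?_⟩
  · have := abs_sub_abs_le_abs_sub (g s) (f s)
    linarith [h.1 s hs, hfg s hs]
  · have hsplit : g s - g u = (g s - f s) + (f s - f u) - (g u - f u) := by ring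
    rw [hsplit]
    linarith [abs_sub ((g s - f s) + (f s - f u)) (g u - f u), abs_add_le (g s - f s) (f s - f u),
      h.2 s hs u hu hsu, hfg s hs, hfg u hu]

theorem of_dense (hD : Dense D) (hf : Continuous f) (h : BoundedWithOscillationOn D f M ρ ε) :
    BoundedWithOscillationOn univ f M ρ ε := by
  refine ⟨fun s _ => hD.induction h.1 (isClosed_le (by fun_prop) continuous_const) s,
    fun s _ u _ hsu => not_lt.1 fun hlt => ?_⟩
  have hopen : IsOpen {p : T × T | dist p.1 p.2 < ρ ∧ ε < |f p.1 - f p.2|} :=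
    (isOpen_lt (continuous_fst.dist continuous_snd) continuous_const).inter
      (isOpen_lt continuous_const ((hf.comp continuous_fst).sub (hf.comp continuous_snd)).abs)
  obtain ⟨p, ⟨hpρ, hpε⟩, hpD⟩ := (hD.prod hD).inter_open_nonempty _ hopen ⟨(s, u), hsu, hlt⟩
  exact hpε.not_ge (h.2 p.1 hpD.1 p.2 hpD.2 hpρ)

end BoundedWithOscillationOn

theorem Continuous.exists_boundedWithOscillationOn_univ [CompactSpace T] {f : T → ℝ}
    (hf : Continuous f) {ε : ℝ} (hε : 0 < ε) :
    ∃ M ρ, 0 < ρ ∧ BoundedWithOscillationOn univ f M ρ ε := by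
  obtain ⟨M, hM⟩ := isCompact_univ.exists_bound_of_continuousOn hf.continuousOn
  obtain ⟨ρ, hρ, hfρ⟩ :=
    Metric.uniformContinuous_iff.1 (CompactSpace.uniformContinuous_of_continuous hf) ε hε
  exact ⟨M, ρ, hρ, fun s hs => hM s hs, fun s _ u _ hsu => (hfρ hsu).le⟩

theorem measurableSet_boundedWithOscillationOn {Ω : Type*} [MeasurableSpace Ω]
    {Z : Ω → T → ℝ} (hZ : ∀ s, Measurable fun ω => Z ω s) {D : Set T} (hD : D.Countable)
    (M ρ ε : ℝ) : MeasurableSet {ω | BoundedWithOscillationOn D (Z ω) M ρ ε} := by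
  simp only [BoundedWithOscillationOn, ofPred_and, ofPred_forall]
  exact .inter (.biInter hD fun s _ => measurableSet_le (hZ s).abs measurable_const)
    (.biInter hD fun s _ => .biInter hD fun u _ => .iInter fun _ =>
      measurableSet_le ((hZ s).sub (hZ u)).abs measurable_const)

end Oscillation

theorem exists_measure_not_boundedWithOscillationOn_lt_of_measure_lt {Ω T : Type*} [MeasurableSpace Ω]
    [PseudoMetricSpace T] [CompactSpace T]
    {P : Measure Ω} [IsFiniteMeasure P] {Z B : Ω → T → ℝ} (hZ : ∀ s, Measurable fun ω => Z ω s)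
    (hB : ∀ ω, Continuous (B ω)) {θ : ℝ} (hθ : 0 < θ) {η : ENNReal}
    (hη : P {ω | ∃ s, θ < |Z ω s - B ω s|} < η) :
    ∃ M ρ, 0 < ρ ∧ P {ω | ¬ BoundedWithOscillationOn univ (B ω) M ρ (5 * θ)} < η := by
  obtain ⟨D, hDc, hDd⟩ := TopologicalSpace.exists_countable_dense T
  set S := {ω | ∃ s, θ < |Z ω s - B ω s|}
  have hS : ∀ ω ∉ S, ∀ s, |Z ω s - B ω s| ≤ θ := by simp [S]
  set H : ℕ → Set Ω := fun m => {ω | BoundedWithOscillationOn D (Z ω) m (1 / (m + 1)) (θ + 2 * θ)}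
  have hH_mono : Monotone H := fun m m' hmm ω hω =>
    hω.mono subset_rfl (by exact_mod_cast hmm) (by gcongr) le_rfl
  have hH_cover : ∀ ω ∉ S, ∃ m, ω ∈ H m := by
    intro ω hω
    obtain ⟨M, ρ, hρ, hBω⟩ := (hB ω).exists_boundedWithOscillationOn_univ hθ
    obtain ⟨m₁, hm₁⟩ := exists_nat_ge (M + θ)
    obtain ⟨m₂, hm₂⟩ := exists_nat_one_div_lt hρ
    refine ⟨max m₁ m₂, (hBω.of_abs_sub_le fun s _ => hS ω hω s).mono (subset_univ D)
      (hm₁.trans (by exact_mod_cast le_max_left m₁ m₂)) (le_trans ?_ hm₂.le) le_rfl⟩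
    gcongr
    exact_mod_cast le_max_right m₁ m₂
  have hH_good : ∀ m, ∀ ω ∉ S, ω ∈ H m →
      BoundedWithOscillationOn univ (B ω) (m + θ) (1 / (m + 1)) (5 * θ) := fun m ω hω hωH =>
    ((hωH.of_abs_sub_le fun s _ => by rw [abs_sub_comm]; exact hS ω hω s).of_dense hDd
      (hB ω)).mono subset_rfl le_rfl le_rfl (by linarith)
  -- continuity from above needs measurable sets, so `S` is replaced by a measurable hull
  set S' := toMeasurable P S
  have hlim : Tendsto (fun m => P (S' ∪ (H m)ᶜ)) atTop (𝓝 (P (⋂ m, S' ∪ (H m)ᶜ))) :=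
    tendsto_measure_iInter_atTop
      (fun m => ((measurableSet_toMeasurable P S).union
        (measurableSet_boundedWithOscillationOn hZ hDc _ _ _).compl).nullMeasurableSet)
      (fun m m' hmm => union_subset_union_right _ (compl_subset_compl.2 (hH_mono hmm)))
      ⟨0, measure_ne_top P _⟩
  have hinter : ⋂ m, S' ∪ (H m)ᶜ ⊆ S' := by
    intro ω hω
    by_contra hωS'
    obtain ⟨m, hm⟩ := hH_cover ω fun hωS => hωS' (subset_toMeasurable P S hωS)
    exact ((mem_iInter.1 hω m).resolve_left hωS') hm
  have hlt : P (⋂ m, S' ∪ (H m)ᶜ) < η :=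
    (measure_mono hinter).trans_lt ((measure_toMeasurable S).symm ▸ hη)
  obtain ⟨m, hm⟩ := (hlim.eventually_lt_const hlt).exists
  refine ⟨m + θ, 1 / (m + 1), by positivity, (measure_mono fun ω hω => ?_).trans_lt hm⟩
  by_contra hω'
  simp only [mem_union, not_or, mem_compl_iff, not_not] at hω'
  exact hω (hH_good m ω (fun hωS => hω'.1 (subset_toMeasurable P S hωS)) hω'.2)

theorem exists_measure_not_boundedWithOscillationOn_lt {Ω T : Type*} [MeasurableSpace Ω]
    [PseudoMetricSpace T] [CompactSpace T]
    {P : Measure Ω} [IsFiniteMeasure P] {Z : ℕ → Ω → T → ℝ} {B : Ω → T → ℝ}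
    (hZ : ∀ n s, Measurable fun ω => Z n ω s) (hB : ∀ ω, Continuous (B ω))
    (hZB : ∀ θ > 0, Tendsto (fun n => P {ω | ∃ s, θ < |Z n ω s - B ω s|}) atTop (𝓝 0))
    {ε : ℝ} (hε : 0 < ε) {η : ENNReal} (hη : 0 < η) :
    ∃ M ρ, 0 < ρ ∧ P {ω | ¬ BoundedWithOscillationOn univ (B ω) M ρ ε} < η := by
  obtain ⟨n, hn⟩ := ((hZB (ε / 5) (by positivity)).eventually_lt_const hη).exists
  obtain ⟨M, ρ, hρ, hMρ⟩ :=
    exists_measure_not_boundedWithOscillationOn_lt_of_measure_lt (hZ n) hB (by positivity) hn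
  rw [mul_div_cancel₀ ε (by norm_num)] at hMρ
  exact ⟨M, ρ, hρ, hMρ⟩

theorem abs_div_div_sub_le_of_near {zu Uu Us au as bu bs l ε₁ κ M ε₂ ε₄ : ℝ} (hau : 0 < au)
    (has : 0 < as) (hl : 0 < l) (hz : |(zu - Uu) / au / l - bu| ≤ ε₁)
    (ha : |au / as - 1| ≤ κ) (hb : |bu| ≤ M) (hbb : |bu - bs| ≤ ε₂)
    (hU : |(Uu - Us) / as| ≤ ε₄ * l) :
    |(zu - Us) / as / l - bs| ≤ ε₁ * (1 + κ) + M * κ + ε₂ + ε₄ := by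
  have hsplit : (zu - Us) / as / l - bs = ((zu - Uu) / au / l - bu) * (au / as)
      + bu * (au / as - 1) + (bu - bs) + (Uu - Us) / as / l := by
    field_simp
    ring
  have hratio : |au / as| ≤ 1 + κ := by
    rw [abs_of_pos (div_pos hau has)]
    linarith [le_abs_self (au / as - 1)]
  have hUl : |(Uu - Us) / as / l| ≤ ε₄ := by
    rwa [abs_div, abs_of_pos hl, div_le_iff₀ hl]
  rw [hsplit]
  calc _ ≤ |((zu - Uu) / au / l - bu) * (au / as)| + |bu * (au / as - 1)| + |bu - bs|
        + |(Uu - Us) / as / l| :=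
        (abs_add_le _ _).trans (by gcongr; exact abs_add_three _ _ _)
    _ ≤ ε₁ * (1 + κ) + M * κ + ε₂ + ε₄ := by
      rw [abs_mul, abs_mul]
      gcongr
      · exact (abs_nonneg _).trans hz
      · exact (abs_nonneg _).trans hb

structure IsGrid (jn : ℕ) (t : ℕ → ℝ) (δ : ℝ) : Prop where
  one_le : 1 ≤ jn
  zero : t 0 = 0
  last : t (jn + 1) = 1
  nonneg : 0 ≤ t 1
  le_one : t jn ≤ 1
  lt_succ : ∀ j, 1 ≤ j → j < jn → t j < t (j + 1)
  gap_le : ∀ j ∈ Finset.Icc 1 (jn + 1), t j - t (j - 1) ≤ δ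

namespace IsGrid

variable {jn : ℕ} {t : ℕ → ℝ} {δ : ℝ}

theorem mem_Icc (h : IsGrid jn t δ) {j : ℕ} (hj : j ∈ Icc 1 jn) : t j ∈ Icc (0 : ℝ) 1 := by
  have hmono : MonotoneOn t (Icc 1 jn) := (strictMonoOn_of_lt_succ ordConnected_Icc
    fun i _ hi hi' => by
      rw [Order.succ_eq_add_one] at hi' ⊢
      exact h.lt_succ i hi.1 (Nat.lt_of_succ_le hi'.2)).monotoneOn
  exact ⟨h.nonneg.trans (hmono ⟨le_rfl, hj.1.trans hj.2⟩ hj hj.1),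
    (hmono hj ⟨hj.1.trans hj.2, le_rfl⟩ hj.2).trans h.le_one⟩

theorem exists_near_linInterp_mem_segment (h : IsGrid jn t δ) (z : ℝ → ℝ) {s : ℝ}
    (hs : s ∈ Icc (0 : ℝ) 1) :
    ∃ u₁ ∈ Icc (0 : ℝ) 1, ∃ u₂ ∈ Icc (0 : ℝ) 1, |u₁ - s| ≤ δ ∧ |u₂ - s| ≤ δ ∧
      linInterp jn t z s ∈ segment ℝ (z u₁) (z u₂) := by
  have hjn := h.one_le
  have hgrid := fun j (hj : j ∈ Icc 1 jn) => h.mem_Icc hj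
  have hgap := fun j (hj₁ : 1 ≤ j) (hj₂ : j ≤ jn + 1) => h.gap_le j (Finset.mem_Icc.2 ⟨hj₁, hj₂⟩)
  by_cases h₁ : s ≤ t 1
  · have hnear : |t 1 - s| ≤ δ := by
      have := hgap 1 le_rfl (by omega)
      rw [abs_of_nonneg (by linarith)]
      simp only [Nat.sub_self, h.zero] at this
      linarith [hs.1]
    refine ⟨t 1, hgrid 1 ⟨le_rfl, hjn⟩, t 1, hgrid 1 ⟨le_rfl, hjn⟩, hnear, hnear, ?_⟩
    rw [linInterp, if_pos h₁]
    exact left_mem_segment ℝ _ _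
  by_cases h₂ : ∃ j, 2 ≤ j ∧ j ≤ jn ∧ t (j - 1) < s ∧ s ≤ t j
  · rw [linInterp, if_neg h₁, dif_pos h₂]
    obtain ⟨hj₂, hjn', hlt, hle⟩ := Nat.find_spec h₂
    set j := Nat.find h₂
    have hgap_j := hgap j (by omega) (by omega)
    have hpos : 0 < t j - t (j - 1) := by linarith
    refine ⟨t (j - 1), hgrid _ ⟨by omega, by omega⟩, t j, hgrid _ ⟨by omega, hjn'⟩,
      by rw [abs_of_nonpos (by linarith)]; linarith, by rw [abs_of_nonneg (by linarith)]; linarith,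
      (t j - s) / (t j - t (j - 1)), (s - t (j - 1)) / (t j - t (j - 1)),
      div_nonneg (by linarith) hpos.le, div_nonneg (by linarith) hpos.le, ?_, ?_⟩
    · field_simp
      ring
    · rw [smul_eq_mul, smul_eq_mul]
      field_simp
  -- past every cell: `s` lies in the last gap `(t jn, 1]`
  have hright : ∀ j, 1 ≤ j → j ≤ jn → t j < s := by
    intro j hj
    induction j, hj using Nat.le_induction with
    | base => exact fun _ => not_le.1 h₁
    | succ j hj ih =>
      exact fun hj' => not_le.1 fun hle =>
        h₂ ⟨j + 1, by omega, hj', by simpa using ih (by omega), hle⟩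
  have hnear : |t jn - s| ≤ δ := by
    have := hgap (jn + 1) (by omega) le_rfl
    rw [abs_of_neg (by linarith [hright jn hjn le_rfl])]
    simp only [Nat.add_sub_cancel, h.last] at this
    linarith [hs.2]
  refine ⟨t jn, hgrid jn ⟨hjn, le_rfl⟩, t jn, hgrid jn ⟨hjn, le_rfl⟩, hnear, hnear, ?_⟩
  rw [linInterp, if_neg h₁, dif_neg h₂]
  exact left_mem_segment ℝ _ _

theorem linInterp_mem (h : IsGrid jn t δ) {z : ℝ → ℝ} {s : ℝ} (hs : s ∈ Icc (0 : ℝ) 1)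
    {K : Set ℝ} (hK : Convex ℝ K) (hz : ∀ u ∈ Icc (0 : ℝ) 1, |u - s| ≤ δ → z u ∈ K) :
    linInterp jn t z s ∈ K := by
  obtain ⟨u₁, hu₁, u₂, hu₂, h₁, h₂, hmem⟩ := h.exists_near_linInterp_mem_segment z hs
  exact hK.segment_subset (hz u₁ hu₁ h₁) (hz u₂ hu₂ h₂) hmem

theorem abs_linInterp_sub_div_div_sub_le (h : IsGrid jn t δ) {z : ℝ → ℝ} {s c d l b ε : ℝ}
    (hs : s ∈ Icc (0 : ℝ) 1) (hd : 0 < d) (hl : 0 < l)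
    (hz : ∀ u ∈ Icc (0 : ℝ) 1, |u - s| ≤ δ → |(z u - c) / d / l - b| ≤ ε) :
    |(linInterp jn t z s - c) / d / l - b| ≤ ε := by
  have hmono : Monotone fun x : ℝ => (x - c) / d / l - b := fun x y hxy => by dsimp only; gcongr
  exact abs_le.2 <| h.linInterp_mem hs
    (convex_iff_ordConnected.2 (ordConnected_Icc.preimage_mono hmono)) fun u hu hus =>
      abs_le.1 (hz u hu hus)

theorem abs_linInterp_error_le (h : IsGrid jn t δ) {z U a b : ℝ → ℝ} {l ε₁ κ M ε₂ ε₄ : ℝ}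
    (ha_pos : ∀ s ∈ Icc (0 : ℝ) 1, 0 < a s) (hl : 0 < l)
    (hz : ∀ u ∈ Icc (0 : ℝ) 1, |(z u - U u) / a u / l - b u| ≤ ε₁)
    (ha : ∀ u ∈ Icc (0 : ℝ) 1, ∀ s ∈ Icc (0 : ℝ) 1, |u - s| ≤ δ → |a u / a s - 1| ≤ κ)
    (hb : ∀ u ∈ Icc (0 : ℝ) 1, |b u| ≤ M)
    (hbb : ∀ u ∈ Icc (0 : ℝ) 1, ∀ s ∈ Icc (0 : ℝ) 1, |u - s| ≤ δ → |b u - b s| ≤ ε₂)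
    (hU : ∀ u ∈ Icc (0 : ℝ) 1, ∀ s ∈ Icc (0 : ℝ) 1, |u - s| ≤ δ → |(U u - U s) / a s| ≤ ε₄ * l)
    {s : ℝ} (hs : s ∈ Icc (0 : ℝ) 1) :
    |(linInterp jn t z s - U s) / a s / l - b s| ≤ ε₁ * (1 + κ) + M * κ + ε₂ + ε₄ :=
  h.abs_linInterp_sub_div_div_sub_le hs (ha_pos s hs) hl fun u hu hus =>
    abs_div_div_sub_le_of_near (ha_pos u hu) (ha_pos s hs) hl (hz u hu) (ha u hu s hs hus)
      (hb u hu) (hbb u hu s hs hus) (hU u hu s hs hus)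

theorem setOf_lt_abs_linInterp_error_subset {Ω : Type*} (h : IsGrid jn t δ)
    {z : Ω → ℝ → ℝ} {U a : ℝ → ℝ} {b : Ω → ℝ → ℝ} {l ε ε₁ κ M ρ ε₂ ε₄ : ℝ}
    (ha_pos : ∀ s ∈ Icc (0 : ℝ) 1, 0 < a s) (hl : 0 < l)
    (ha : ∀ u ∈ Icc (0 : ℝ) 1, ∀ s ∈ Icc (0 : ℝ) 1, |u - s| ≤ δ → |a u / a s - 1| ≤ κ)
    (hU : ∀ u ∈ Icc (0 : ℝ) 1, ∀ s ∈ Icc (0 : ℝ) 1, |u - s| ≤ δ → |(U u - U s) / a s| ≤ ε₄ * l)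
    (hδρ : δ < ρ) (hε : ε₁ * (1 + κ) + M * κ + ε₂ + ε₄ ≤ ε) :
    {ω | ∃ s ∈ Icc (0 : ℝ) 1, ε < |(linInterp jn t (z ω) s - U s) / a s / l - b ω s|} ⊆
      {ω | ∃ s ∈ Icc (0 : ℝ) 1, ε₁ < |(z ω s - U s) / a s / l - b ω s|} ∪
        {ω | ¬ BoundedWithOscillationOn univ (fun s : Icc (0 : ℝ) 1 => b ω s) M ρ ε₂} := by
  intro ω ⟨s, hs, hlt⟩
  by_contra hω
  obtain ⟨hz, hb⟩ : (∀ u ∈ Icc (0 : ℝ) 1, |(z ω u - U u) / a u / l - b ω u| ≤ ε₁) ∧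
      BoundedWithOscillationOn univ (fun s : Icc (0 : ℝ) 1 => b ω s) M ρ ε₂ := by
    simpa only [mem_union, mem_ofPred_eq, not_or, not_exists, not_and, not_lt, not_not] using hω
  exact hlt.not_ge <| (h.abs_linInterp_error_le ha_pos hl hz ha
    (fun u hu => hb.1 ⟨u, hu⟩ trivial)
    (fun u hu s hs hus => hb.2 ⟨u, hu⟩ trivial ⟨s, hs⟩ trivial (hus.trans_lt hδρ)) hU hs).trans hε

end IsGrid

/-- the linearly interpolated estimator of the location function
inherits the uniform asymptotic behavior of the original estimator. -/
theorem interpolated_location_estimator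
    {Ω : Type*} [MeasurableSpace Ω] (P : Measure Ω) [IsProbabilityMeasure P]
    (jn : ℕ → ℕ) (t : ℕ → ℕ → ℝ) (δ : ℕ → ℝ)
    (hjn : ∀ n, 1 ≤ jn n)
    (ht0 : ∀ n, t n 0 = 0) (htend : ∀ n, t n (jn n + 1) = 1)
    (htnonneg : ∀ n, 0 ≤ t n 1) (htle1 : ∀ n, t n (jn n) ≤ 1)
    (htmono : ∀ n j, 1 ≤ j → j < jn n → t n j < t n (j + 1))
    (hδ : ∀ n, δ n = (Finset.Icc 1 (jn n + 1)).sup' ⟨1, Finset.mem_Icc.mpr (by omega)⟩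
      (fun j => t n j - t n (j - 1)))
    (hδ0 : Tendsto δ atTop (𝓝 0))
    (Uhat : ℕ → Ω → ℝ → ℝ) (U : ℕ → ℝ → ℝ) (a : ℕ → ℝ → ℝ) (B : Ω → ℝ → ℝ) (lam : ℕ → ℝ)
    (hmeas : ∀ n s, Measurable fun ω => Uhat n ω s)
    (hapos : ∀ n, ∀ s ∈ Icc (0:ℝ) 1, 0 < a n s)
    (hB : ∀ ω, ContinuousOn (B ω) (Icc 0 1))
    (hlam_pos : ∀ n, 0 < lam n) (hlam_bdd : ∃ C, ∀ n, lam n ≤ C)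
    -- condition (E(λₙ)): uniform convergence in probability of the standardized errors
    (hE : ∀ ε > 0, Tendsto
      (fun n => P {ω | ∃ s ∈ Icc (0:ℝ) 1,
        ε < |(Uhat n ω s - U n s) / a n s / lam n - B ω s|})
      atTop (𝓝 0))
    -- smoothness: sup_{|s-u|≤δₙ} |a_{n,s}/a_{n,u} - 1| = o(λₙ)
    (hasmooth : ∀ ε > 0, ∀ᶠ n in atTop, ∀ s ∈ Icc (0:ℝ) 1, ∀ u ∈ Icc (0:ℝ) 1,
      |s - u| ≤ δ n → |a n s / a n u - 1| ≤ ε * lam n)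
    -- smoothness: sup_{|s-u|≤δₙ} |(U_{n,s} - U_{n,u})/a_{n,u}| = o(λₙ)
    (hUsmooth : ∀ ε > 0, ∀ᶠ n in atTop, ∀ s ∈ Icc (0:ℝ) 1, ∀ u ∈ Icc (0:ℝ) 1,
      |s - u| ≤ δ n → |(U n s - U n u) / a n u| ≤ ε * lam n) :
    ∀ ε > 0, Tendsto
      (fun n => P {ω | ∃ s ∈ Icc (0:ℝ) 1,
        ε < |(linInterp (jn n) (t n) (Uhat n ω) s - U n s) / a n s / lam n - B ω s|})
      atTop (𝓝 0) := by
  intro ε hε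
  obtain ⟨C, hC⟩ := hlam_bdd
  have hCpos : 0 < C := (hlam_pos 0).trans_le (hC 0)
  have hgrid : ∀ n, IsGrid (jn n) (t n) (δ n) := fun n => ⟨hjn n, ht0 n, htend n, htnonneg n,
    htle1 n, htmono n, fun j hj => hδ n ▸ Finset.le_sup' (fun j => t n j - t n (j - 1)) hj⟩
  set Z : ℕ → Ω → Icc (0 : ℝ) 1 → ℝ := fun n ω s => (Uhat n ω s - U n s) / a n s / lam n
  have hEZ : ∀ θ > 0, Tendsto (fun n => P {ω | ∃ s, θ < |Z n ω s - B ω s|}) atTop (𝓝 0) :=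
    fun θ hθ => by simpa only [Z, Subtype.exists, exists_prop] using hE θ hθ
  refine ENNReal.tendsto_nhds_zero.2 fun η hη => ?_
  have hη2 : 0 < η / 2 := ENNReal.half_pos hη.ne'
  obtain ⟨M, ρ, hρ, hBM⟩ := exists_measure_not_boundedWithOscillationOn_lt (Z := Z)
    (B := fun ω s => B ω s) (fun n s => (((hmeas n s).sub_const _).div_const _).div_const _)
    (fun ω => (hB ω).domRestrict) hEZ (ε := ε / 4) (by positivity) hη2
  set κ := ε / (4 * (|M| + 1))
  set ε₁ := ε / (4 * (1 + κ))
  have hbudget : ε₁ * (1 + κ) + M * κ + ε / 4 + ε / 4 ≤ ε := by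
    have hε₁ : ε₁ * (1 + κ) = ε / 4 := by
      have : 1 + κ ≠ 0 := by positivity
      simp only [ε₁]; field_simp
    have hκ : M * κ ≤ ε / 4 := by
      simp only [κ]
      rw [mul_div_assoc', div_le_div_iff₀ (by positivity) (by positivity)]
      nlinarith [le_abs_self M]
    linarith
  have hκ : ∀ n, κ / C * lam n ≤ κ := fun n => by
    rw [div_mul_eq_mul_div, div_le_iff₀ hCpos]; gcongr; exact hC n
  filter_upwards [hδ0.eventually_lt_const hρ, hasmooth (κ / C) (by positivity),
    hUsmooth (ε / 4) (by positivity), (hE ε₁ (by positivity)).eventually_lt_const hη2]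
    with n hδn ha hU hn
  calc _ ≤ _ := measure_mono ((hgrid n).setOf_lt_abs_linInterp_error_subset (hapos n)
        (hlam_pos n) (fun u hu s hs hus => (ha u hu s hs hus).trans (hκ n)) hU hδn hbudget)
    _ ≤ η / 2 + η / 2 := (measure_union_le _ _).trans (add_le_add hn.le hBM.le)
    _ = η := ENNReal.add_halves η
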